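/- Let C be a contractible topological space with contraction g : [0,1] × C → C (g(0,·) = id, g(1,·) ≡ c₀), and let X be a topological space with an equivalence relation R whose classes are closed and such that g(s, ·) maps each R-class into the closure of an R-class for each s. Then the quotient X/R-analog construction applied to the mapping space C(X, C) yields a contractible quotient: the induced map on equivalence classes satisfies id = g(0,·)* and g(1,·)* is constant, so the quotient space of equivalence classes is contractible. -/

import Mathlib

/-!
Post-composing with the contraction of `C` contracts `C(X, C)`. Since this contraction respects
`S` at every time it descends to `Quotient S`; the descended map is continuous because `I` is
locally compact, so the product of `id I` with a quotient map is again a quotient map.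
-/

open unitInterval

namespace ContinuousMap.Homotopy

variable {X Y Z : Type*} [TopologicalSpace X] [TopologicalSpace Y] [TopologicalSpace Z]

def postcomp {g₀ g₁ : C(Y, Z)} (F : Homotopy g₀ g₁) :
    Homotopy (⟨g₀.comp, continuous_postcomp g₀⟩ : C(C(X, Y), C(X, Z)))
      ⟨g₁.comp, continuous_postcomp g₁⟩ where
  toFun p := (F : C(I × Y, Z)).comp ((const X p.1).prodMk p.2)
  continuous_toFun := (continuous_postcomp _).comp continuous_prodMk_const
  map_zero_left f := by ext; simp
  map_one_left f := by ext; simp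

theorem contractibleSpace_quotient {E : Type*} [TopologicalSpace E] {S : Setoid E} {e₀ : E}
    (H : Homotopy (ContinuousMap.id E) (const E e₀))
    (hH : ∀ s a b, S a b → S (H (s, a)) (H (s, b))) : ContractibleSpace (Quotient S) := by
  let K : I × Quotient S → Quotient S := fun p => Quotient.map (fun a => H (p.1, a)) (hH p.1) p.2
  have hK : Continuous K := isQuotientMap_quotient_mk'.continuous_lift_prod_right
    (continuous_quotient_mk'.comp H.continuous)
  rw [contractible_iff_id_nullhomotopic]
  refine ⟨⟦e₀⟧, ⟨⟨⟨K, hK⟩, ?_, ?_⟩⟩⟩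
  · rintro ⟨a⟩
    exact congrArg (Quot.mk _) (H.apply_zero a)
  · rintro ⟨a⟩
    exact congrArg (Quot.mk _) (H.apply_one a)

end ContinuousMap.Homotopy

theorem quotient_mapping_space_contractible_general {X C : Type*} [TopologicalSpace X]
    [TopologicalSpace C] (g : C(I × C, C)) (c₀ : C)
    (h0 : ∀ z : C, g (0, z) = z) (h1 : ∀ z : C, g (1, z) = c₀)
    (S : Setoid C(X, C))
    (hcompat : ∀ (s : I) (f f' : C(X, C)), S.r f f' →
      S.r (⟨fun x => g (s, f x),
            g.continuous.comp (continuous_const.prodMk f.continuous)⟩ : C(X, C))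
          (⟨fun x => g (s, f' x),
            g.continuous.comp (continuous_const.prodMk f'.continuous)⟩ : C(X, C))) :
    ContractibleSpace (Quotient S) := by
  let contraction : (ContinuousMap.id C).Homotopy (.const C c₀) := ⟨g, h0, h1⟩
  let liftedContraction : (ContinuousMap.id C(X, C)).Homotopy (.const _ (.const X c₀)) :=
    contraction.postcomp.cast rfl rfl
  exact liftedContraction.contractibleSpace_quotient hcompat

/-- Let `C` be contractible via `g : [0,1] × C → C` with `g(0,·) = id`, `g(1,·) ≡ c₀`, and
let `S` be an equivalence relation on the mapping space `C(X, C)` with closed classes such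
that post-composition with `g(s,·)` maps each class into the class of the composed map.
Then the quotient of `C(X, C)` by `S` is contractible. -/
theorem quotient_mapping_space_contractible {X C : Type*} [TopologicalSpace X]
    [TopologicalSpace C] (g : C(I × C, C)) (c₀ : C)
    (h0 : ∀ z : C, g (0, z) = z) (h1 : ∀ z : C, g (1, z) = c₀)
    (S : Setoid C(X, C))
    (hclosed : ∀ f : C(X, C), IsClosed {h : C(X, C) | S.r h f})
    (hcompat : ∀ (s : I) (f f' : C(X, C)), S.r f f' →
      S.r (⟨fun x => g (s, f x),
            g.continuous.comp (continuous_const.prodMk f.continuous)⟩ : C(X, C))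
          (⟨fun x => g (s, f' x),
            g.continuous.comp (continuous_const.prodMk f'.continuous)⟩ : C(X, C))) :
    ContractibleSpace (Quotient S) :=
  quotient_mapping_space_contractible_general g c₀ h0 h1 S hcompat
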